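/- arXiv:2603.10423 — 4 statements merged into one kernel-verified Lean document; each statement's English description precedes it below -/
import Mathlib

section
/- Let T be a positive semi-definite bounded operator on a Hilbert space H and M a closed subspace of H with orthogonal projections P_M and P_{M⊥}. Set C_M = (‖P_M T P_M‖ · ‖P_{M⊥} T P_{M⊥}‖)^{1/2}. Then −C_M·I ≤ T − P_M T P_M − P_{M⊥} T P_{M⊥} ≤ C_M·I in the order of self-adjoint operators. -/
/-!
Write `p = P_M x` and `q = P_{M⊥} x`. Expanding `x = p + q`, the quadratic form of
`T - P_M T P_M - P_{M⊥} T P_{M⊥}` at `x` is `2 Re ⟪T p, q⟫`. Cauchy–Schwarz for the semi-inner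
product `⟪T ·, ·⟫` bounds it by `2 √(⟪T p, p⟫ ⟪T q, q⟫)`, and
`⟪T p, p⟫ = ⟪P_M T P_M p, p⟫ ≤ ‖P_M T P_M‖ ‖p‖²` (likewise for `q`), so it is at most
`2 C_M ‖p‖ ‖q‖ ≤ C_M (‖p‖² + ‖q‖²) = C_M ‖x‖²`.
-/

open ContinuousLinearMap RCLike
open scoped InnerProductSpace

namespace ContinuousLinearMap

variable {𝕜 E : Type*} [RCLike 𝕜] [NormedAddCommGroup E] [InnerProductSpace 𝕜 E]
  {T : E →L[𝕜] E}

theorem IsPositive.norm_inner_sq_le (hT : T.IsPositive) (x y : E) :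
    ‖⟪T x, y⟫_𝕜‖ ^ 2 ≤ re ⟪T x, x⟫_𝕜 * re ⟪T y, y⟫_𝕜 := by
  let c : PreInnerProductSpace.Core 𝕜 E :=
    { inner x y := ⟪T x, y⟫_𝕜
      conj_inner_symm x y := by rw [inner_conj_symm, hT.inner_left_eq_inner_right]
      re_inner_nonneg := hT.re_inner_nonneg_left
      add_left x y z := by simp only [map_add, inner_add_left]
      smul_left x y r := by simp only [map_smul, inner_smul_left] }
  have h : ‖⟪T x, y⟫_𝕜‖ * ‖⟪T y, x⟫_𝕜‖ ≤ re ⟪T x, x⟫_𝕜 * re ⟪T y, y⟫_𝕜 :=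
    InnerProductSpace.Core.inner_mul_inner_self_le (c := c) x y
  rwa [hT.inner_left_eq_inner_right y x, norm_inner_symm y (T x), ← sq] at h

theorem IsPositive.abs_re_inner_le_sqrt_of_le (hT : T.IsPositive) {x y : E} {a b : ℝ}
    (ha : re ⟪T x, x⟫_𝕜 ≤ a) (hb : re ⟪T y, y⟫_𝕜 ≤ b) :
    |re ⟪T x, y⟫_𝕜| ≤ √(a * b) := by
  refine Real.abs_le_sqrt ?_
  calc re ⟪T x, y⟫_𝕜 ^ 2 ≤ ‖⟪T x, y⟫_𝕜‖ ^ 2 := by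
        rw [← sq_abs]; gcongr; exact abs_re_le_norm _
    _ ≤ re ⟪T x, x⟫_𝕜 * re ⟪T y, y⟫_𝕜 := hT.norm_inner_sq_le x y
    _ ≤ a * b := mul_le_mul ha hb (hT.re_inner_nonneg_left y) ((hT.re_inner_nonneg_left x).trans ha)

end ContinuousLinearMap

namespace Submodule

variable {𝕜 E : Type*} [RCLike 𝕜] [NormedAddCommGroup E] [InnerProductSpace 𝕜 E]
  (K : Submodule 𝕜 E) [K.HasOrthogonalProjection] (T : E →L[𝕜] E)

theorem re_inner_sub_compressions_apply_self (hT : T.IsSymmetric) (x : E) :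
    re ⟪(T - K.starProjection ∘L T ∘L K.starProjection
      - Kᗮ.starProjection ∘L T ∘L Kᗮ.starProjection) x, x⟫_𝕜 =
      2 * re ⟪T (K.starProjection x), Kᗮ.starProjection x⟫_𝕜 := by
  simp only [sub_apply, comp_apply, inner_sub_left, inner_starProjection_left_eq_right, map_sub]
  set p := K.starProjection x
  set q := Kᗮ.starProjection x
  have hqp : re ⟪T q, p⟫_𝕜 = re ⟪T p, q⟫_𝕜 := by rw [hT.apply_clm, inner_re_symm]
  have hx : p + q = x := K.starProjection_add_starProjection_orthogonal x
  rw [← hx]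
  simp only [map_add, inner_add_left, inner_add_right, hqp]
  ring

theorem re_inner_apply_starProjection_self_le (x : E) :
    re ⟪T (K.starProjection x), K.starProjection x⟫_𝕜 ≤
      ‖K.starProjection ∘L T ∘L K.starProjection‖ * ‖K.starProjection x‖ ^ 2 := by
  set p := K.starProjection x
  have hp : K.starProjection p = p := starProjection_eq_self_iff.mpr (K.starProjection_apply_mem x)
  calc re ⟪T p, p⟫_𝕜 = re ⟪(K.starProjection ∘L T ∘L K.starProjection) p, p⟫_𝕜 := by
        rw [comp_apply, comp_apply, inner_starProjection_left_eq_right, hp]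
    _ ≤ ‖(K.starProjection ∘L T ∘L K.starProjection) p‖ * ‖p‖ := re_inner_le_norm _ _
    _ ≤ ‖K.starProjection ∘L T ∘L K.starProjection‖ * ‖p‖ * ‖p‖ := by gcongr; exact le_opNorm _ _
    _ = _ := by ring

theorem abs_re_inner_sub_compressions_apply_self_le (hT : T.IsPositive) (x : E) :
    |re ⟪(T - K.starProjection ∘L T ∘L K.starProjection
      - Kᗮ.starProjection ∘L T ∘L Kᗮ.starProjection) x, x⟫_𝕜| ≤
      √(‖K.starProjection ∘L T ∘L K.starProjection‖ *
        ‖Kᗮ.starProjection ∘L T ∘L Kᗮ.starProjection‖) * ‖x‖ ^ 2 := by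
  set a := ‖K.starProjection ∘L T ∘L K.starProjection‖
  set b := ‖Kᗮ.starProjection ∘L T ∘L Kᗮ.starProjection‖
  set p := K.starProjection x
  set q := Kᗮ.starProjection x
  have hpq : |re ⟪T p, q⟫_𝕜| ≤ √(a * b) * (‖p‖ * ‖q‖) := by
    have h := hT.abs_re_inner_le_sqrt_of_le (K.re_inner_apply_starProjection_self_le T x)
      (Kᗮ.re_inner_apply_starProjection_self_le T x)
    rwa [show a * ‖p‖ ^ 2 * (b * ‖q‖ ^ 2) = a * b * (‖p‖ * ‖q‖) ^ 2 by ring,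
      Real.sqrt_mul (by positivity), Real.sqrt_sq (by positivity)] at h
  rw [K.re_inner_sub_compressions_apply_self T hT.isSymmetric, abs_mul, abs_two,
    K.norm_sq_eq_add_norm_sq_starProjection x]
  calc 2 * |re ⟪T p, q⟫_𝕜| ≤ √(a * b) * (2 * ‖p‖ * ‖q‖) := by linarith
    _ ≤ √(a * b) * (‖p‖ ^ 2 + ‖q‖ ^ 2) := by gcongr; exact two_mul_le_add_sq _ _

end Submodule

theorem ContinuousLinearMap.isPositive_smul_one_sub_and_add_smul_one_of_abs_re_inner_le
    {H : Type*} [NormedAddCommGroup H] [InnerProductSpace ℂ H] {D : H →L[ℂ] H}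
    (hD : D.IsSymmetric) {c : ℝ} (h : ∀ x, |re ⟪D x, x⟫_ℂ| ≤ c * ‖x‖ ^ 2) :
    (c • 1 - D).IsPositive ∧ (D + c • 1).IsPositive := by
  have hc : (c • (1 : H →L[ℂ] H)).IsSymmetric := fun x y => by
    simp only [coe_coe, smul_apply, one_apply_eq_self, inner_smul_left_eq_smul,
      inner_smul_right_eq_smul]
  have hcx (x : H) : re ⟪(c • (1 : H →L[ℂ] H)) x, x⟫_ℂ = c * ‖x‖ ^ 2 := by
    rw [smul_apply, one_apply_eq_self, inner_smul_left_eq_smul, RCLike.smul_re,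
      inner_self_eq_norm_sq]
  refine ⟨⟨hc.sub hD, fun x => ?_⟩, ⟨hD.add hc, fun x => ?_⟩⟩
  · rw [reApplyInnerSelf_apply, sub_apply, inner_sub_left, map_sub, hcx]
    linarith [(abs_le.mp (h x)).2]
  · rw [reApplyInnerSelf_apply, add_apply, inner_add_left, map_add, hcx]
    linarith [(abs_le.mp (h x)).1]

theorem stmt0_general {H : Type*} [NormedAddCommGroup H] [InnerProductSpace ℂ H]
    (T : H →L[ℂ] H) (hT : T.IsPositive)
    (K : Submodule ℂ H) [CompleteSpace K] :
    ((Real.sqrt (‖(K.subtypeL.comp (Submodule.orthogonalProjectionOnto K)).comp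
          (T.comp (K.subtypeL.comp (Submodule.orthogonalProjectionOnto K)))‖ *
        ‖(Kᗮ.subtypeL.comp (Submodule.orthogonalProjectionOnto Kᗮ)).comp
          (T.comp (Kᗮ.subtypeL.comp (Submodule.orthogonalProjectionOnto Kᗮ)))‖) • (1 : H →L[ℂ] H)) -
      (T - (K.subtypeL.comp (Submodule.orthogonalProjectionOnto K)).comp
          (T.comp (K.subtypeL.comp (Submodule.orthogonalProjectionOnto K))) -
        (Kᗮ.subtypeL.comp (Submodule.orthogonalProjectionOnto Kᗮ)).comp
          (T.comp (Kᗮ.subtypeL.comp (Submodule.orthogonalProjectionOnto Kᗮ))))).IsPositive ∧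
    ((T - (K.subtypeL.comp (Submodule.orthogonalProjectionOnto K)).comp
          (T.comp (K.subtypeL.comp (Submodule.orthogonalProjectionOnto K))) -
        (Kᗮ.subtypeL.comp (Submodule.orthogonalProjectionOnto Kᗮ)).comp
          (T.comp (Kᗮ.subtypeL.comp (Submodule.orthogonalProjectionOnto Kᗮ)))) +
      (Real.sqrt (‖(K.subtypeL.comp (Submodule.orthogonalProjectionOnto K)).comp
          (T.comp (K.subtypeL.comp (Submodule.orthogonalProjectionOnto K)))‖ *
        ‖(Kᗮ.subtypeL.comp (Submodule.orthogonalProjectionOnto Kᗮ)).comp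
          (T.comp (Kᗮ.subtypeL.comp (Submodule.orthogonalProjectionOnto Kᗮ)))‖) • (1 : H →L[ℂ] H))).IsPositive := by
  refine isPositive_smul_one_sub_and_add_smul_one_of_abs_re_inner_le ?_
    (K.abs_re_inner_sub_compressions_apply_self_le T hT)
  exact (hT.isSymmetric.sub (hT.conj_starProjection K).isSymmetric).sub
    (hT.conj_starProjection Kᗮ).isSymmetric

/-- Splitting lemma: for a positive semi-definite bounded operator `T` on a Hilbert space and a
closed subspace `K` with orthogonal projections `P = P_K`, `Q = P_{K⊥}`, setting
`C = (‖PTP‖·‖QTQ‖)^{1/2}`, we have `−C·I ≤ T − PTP − QTQ ≤ C·I`. -/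
theorem stmt0 {H : Type*} [NormedAddCommGroup H] [InnerProductSpace ℂ H]
    [CompleteSpace H] (T : H →L[ℂ] H) (hT : T.IsPositive)
    (K : Submodule ℂ H) [CompleteSpace K] :
    ((Real.sqrt (‖(K.subtypeL.comp (Submodule.orthogonalProjectionOnto K)).comp
          (T.comp (K.subtypeL.comp (Submodule.orthogonalProjectionOnto K)))‖ *
        ‖(Kᗮ.subtypeL.comp (Submodule.orthogonalProjectionOnto Kᗮ)).comp
          (T.comp (Kᗮ.subtypeL.comp (Submodule.orthogonalProjectionOnto Kᗮ)))‖) • (1 : H →L[ℂ] H)) -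
      (T - (K.subtypeL.comp (Submodule.orthogonalProjectionOnto K)).comp
          (T.comp (K.subtypeL.comp (Submodule.orthogonalProjectionOnto K))) -
        (Kᗮ.subtypeL.comp (Submodule.orthogonalProjectionOnto Kᗮ)).comp
          (T.comp (Kᗮ.subtypeL.comp (Submodule.orthogonalProjectionOnto Kᗮ))))).IsPositive ∧
    ((T - (K.subtypeL.comp (Submodule.orthogonalProjectionOnto K)).comp
          (T.comp (K.subtypeL.comp (Submodule.orthogonalProjectionOnto K))) -
        (Kᗮ.subtypeL.comp (Submodule.orthogonalProjectionOnto Kᗮ)).comp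
          (T.comp (Kᗮ.subtypeL.comp (Submodule.orthogonalProjectionOnto Kᗮ)))) +
      (Real.sqrt (‖(K.subtypeL.comp (Submodule.orthogonalProjectionOnto K)).comp
          (T.comp (K.subtypeL.comp (Submodule.orthogonalProjectionOnto K)))‖ *
        ‖(Kᗮ.subtypeL.comp (Submodule.orthogonalProjectionOnto Kᗮ)).comp
          (T.comp (Kᗮ.subtypeL.comp (Submodule.orthogonalProjectionOnto Kᗮ)))‖) • (1 : H →L[ℂ] H))).IsPositive :=
  stmt0_general T hT K
end

section
/- Let Ψ : X → H be a continuous frame with frame bounds A and B, and let {x_n}_{n∈ℕ} ⊆ X and c > 0 be such that the operator norm inequality ‖S_Ψ − c·∑_{n} T_{Ψ(x_n)}‖ < ε holds, where ε < A. Then {Ψ(x_n)}_{n∈ℕ} is a frame for H with frame bounds c^{-1}(A − ε) and c^{-1}(B + ε); equivalently, for every f ∈ H, c^{-1}(A−ε)‖f‖² ≤ ∑_n |⟨f, Ψ(x_n)⟩|² ≤ c^{-1}(B+ε)‖f‖². -/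
open MeasureTheory ContinuousLinearMap
open scoped ComplexInnerProductSpace

/-! The quadratic forms of the two operators are the frame sums: `re ⟪S f, f⟫ = ∫ |⟪Ψ t, f⟫|²`
and `re ⟪Q f, f⟫ = ∑ |⟪Ψ (x n), f⟫|²`. Since `|re ⟪(S - c • Q) f, f⟫| ≤ ε ‖f‖²`, the frame
bounds `A`, `B` of the first form pass to `c` times the second up to `∓ ε`. -/

section FrameCoefficients

open RCLike

variable {𝕜 E : Type*} [RCLike 𝕜] [NormedAddCommGroup E] [InnerProductSpace 𝕜 E]

local notation "⟪" x ", " y "⟫" => inner 𝕜 x y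

theorem re_inner_eq_tsum_norm_inner_sq_of_hasSum {ι : Type*} {v : ι → E} {f y : E}
    (h : HasSum (fun n => ⟪v n, f⟫ • v n) y) : re ⟪y, f⟫ = ∑' n, ‖⟪v n, f⟫‖ ^ 2 := by
  have hterm (n : ι) : ⟪f, ⟪v n, f⟫ • v n⟫ = ((‖⟪v n, f⟫‖ ^ 2 : ℝ) : 𝕜) := by
    rw [inner_smul_right, ← inner_conj_symm (v n) f, RCLike.conj_mul, norm_conj, ofReal_pow]
  have hsum := (h.mapL (innerSL 𝕜 f)).mapL reCLM
  simp only [innerSL_apply_apply, hterm, reCLM_apply, ofReal_re] at hsum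
  rw [inner_re_symm, hsum.tsum_eq]

variable {X : Type*} [MeasurableSpace X]

theorem re_inner_eq_integral_norm_inner_sq {μ : Measure X} {Ψ : X → E} {f y : E}
    (h : ⟪f, y⟫ = ∫ t, ⟪f, Ψ t⟫ * ⟪Ψ t, f⟫ ∂μ) : re ⟪y, f⟫ = ∫ t, ‖⟪Ψ t, f⟫‖ ^ 2 ∂μ := by
  have hpoint (t : X) : ⟪f, Ψ t⟫ * ⟪Ψ t, f⟫ = ((‖⟪Ψ t, f⟫‖ ^ 2 : ℝ) : 𝕜) := by
    rw [← inner_conj_symm (Ψ t) f, mul_conj, norm_conj, ofReal_pow]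
  simp only [hpoint, integral_ofReal] at h
  rw [inner_re_symm, h, ofReal_re]

theorem abs_re_inner_apply_self_le (T : E →L[𝕜] E) (f : E) :
    |re ⟪T f, f⟫| ≤ ‖T‖ * ‖f‖ ^ 2 :=
  calc |re ⟪T f, f⟫| ≤ ‖⟪T f, f⟫‖ := abs_re_le_norm _
    _ ≤ ‖T f‖ * ‖f‖ := norm_inner_le_norm _ _
    _ ≤ ‖T‖ * ‖f‖ * ‖f‖ := by gcongr; exact le_opNorm T f
    _ = ‖T‖ * ‖f‖ ^ 2 := by ring

theorem abs_re_inner_sub_smul_le [NormedSpace ℝ E] [IsScalarTower ℝ 𝕜 E] {S Q : E →L[𝕜] E}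
    {c ε : ℝ} (h : ‖S - c • Q‖ ≤ ε) (f : E) :
    |re ⟪S f, f⟫ - c * re ⟪Q f, f⟫| ≤ ε * ‖f‖ ^ 2 := by
  have hre : re ⟪(S - c • Q) f, f⟫ = re ⟪S f, f⟫ - c * re ⟪Q f, f⟫ := by
    rw [sub_apply, inner_sub_left, smul_apply, real_smul_eq_coe_smul (K := 𝕜),
      inner_smul_real_left, map_sub, real_smul_eq_coe_smul (K := 𝕜), smul_eq_mul, re_ofReal_mul]
  rw [← hre]
  exact (abs_re_inner_apply_self_le _ f).trans (by gcongr)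

end FrameCoefficients

theorem stmt4_general {H X : Type*} [NormedAddCommGroup H] [InnerProductSpace ℂ H]
    [MeasurableSpace X] (μ : Measure X) (Ψ : X → H) (A B : ℝ)
    (hframe : ∀ f : H, A * ‖f‖ ^ 2 ≤ (∫ t, ‖⟪Ψ t, f⟫‖ ^ 2 ∂μ) ∧
      (∫ t, ‖⟪Ψ t, f⟫‖ ^ 2 ∂μ) ≤ B * ‖f‖ ^ 2)
    (S : H →L[ℂ] H)
    (hS : ∀ f g : H, ⟪g, S f⟫ = ∫ t, ⟪g, Ψ t⟫ * ⟪Ψ t, f⟫ ∂μ)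
    (x : ℕ → X) (c : ℝ) (hc : 0 < c)
    (Q : H →L[ℂ] H)
    (hQ : ∀ f : H, HasSum (fun n => ⟪Ψ (x n), f⟫ • Ψ (x n)) (Q f))
    (ε : ℝ) (hnorm : ‖S - c • Q‖ < ε) :
    ∀ f : H,
      c⁻¹ * (A - ε) * ‖f‖ ^ 2 ≤ (∑' n, ‖⟪Ψ (x n), f⟫‖ ^ 2) ∧
      (∑' n, ‖⟪Ψ (x n), f⟫‖ ^ 2) ≤ c⁻¹ * (B + ε) * ‖f‖ ^ 2 := by
  intro f
  obtain ⟨hlower, hupper⟩ := hframe f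
  rw [← re_inner_eq_integral_norm_inner_sq (hS f f)] at hlower hupper
  rw [← re_inner_eq_tsum_norm_inner_sq_of_hasSum (hQ f)]
  obtain ⟨hclose_lower, hclose_upper⟩ := abs_le.mp (abs_re_inner_sub_smul_le hnorm.le f)
  constructor
  · rw [mul_assoc, inv_mul_le_iff₀ hc]
    linarith
  · rw [mul_assoc, le_inv_mul_iff₀ hc]
    linarith

/-- If `Ψ` is a continuous frame with bounds `A ≤ B`, and `{x_n}`, `c > 0` satisfy
`‖S_Ψ − c ∑ T_{Ψ(x_n)}‖ < ε < A`, then `{Ψ(x_n)}` is a frame with bounds `c⁻¹(A−ε)` and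
`c⁻¹(B+ε)`. -/
theorem stmt4 {H X : Type*} [NormedAddCommGroup H] [InnerProductSpace ℂ H] [CompleteSpace H]
    [MeasurableSpace X] (μ : Measure X) (Ψ : X → H) (A B : ℝ) (hA : 0 < A)
    (hframe : ∀ f : H, A * ‖f‖ ^ 2 ≤ (∫ t, ‖⟪Ψ t, f⟫‖ ^ 2 ∂μ) ∧
      (∫ t, ‖⟪Ψ t, f⟫‖ ^ 2 ∂μ) ≤ B * ‖f‖ ^ 2)
    (S : H →L[ℂ] H)
    (hS : ∀ f g : H, ⟪g, S f⟫ = ∫ t, ⟪g, Ψ t⟫ * ⟪Ψ t, f⟫ ∂μ)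
    (x : ℕ → X) (c : ℝ) (hc : 0 < c)
    (Q : H →L[ℂ] H)
    (hQ : ∀ f : H, HasSum (fun n => ⟪Ψ (x n), f⟫ • Ψ (x n)) (Q f))
    (ε : ℝ) (hε : ε < A) (hnorm : ‖S - c • Q‖ < ε) :
    ∀ f : H,
      c⁻¹ * (A - ε) * ‖f‖ ^ 2 ≤ (∑' n, ‖⟪Ψ (x n), f⟫‖ ^ 2) ∧
      (∑' n, ‖⟪Ψ (x n), f⟫‖ ^ 2) ≤ c⁻¹ * (B + ε) * ‖f‖ ^ 2 :=
  stmt4_general μ Ψ A B hframe S hS x c hc Q hQ ε hnorm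
end

section
/- Let μ be a non-atomic measure on X and E ⊆ X a measurable set with μ(E) < ∞. Then there exist natural numbers ℓ_1, ℓ_2, … and pairwise disjoint measurable subsets E_k ⊆ E such that μ(E_k) = 2^{-ℓ_k} for all k and ∑_k 2^{-ℓ_k} = μ(E). -/
/-!
Greedily writing `μ E` in base two gives `μ E = ∑ₖ 2^{-ℓₖ}`: at each step subtract the largest
power `2^{-ℓ}` strictly below the remainder, which removes at least half of the remainder or a
full unit, so the remainders tend to zero. By Sierpiński's theorem the pieces can then be carved
out of `E` one after another, each one from what is left of `E`.

Sierpiński's theorem is proved greedily as well: starting from `∅`, repeatedly add a subset of the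
rest of `A` that is at least half as large as any subset which still fits under the target `r`.
The added pieces are disjoint, so their measures are summable; if the union fell short of `r`,
a small positive subset of the remaining part of `A` would fit under the target at every step,
so every piece would have at least half its measure, against summability.
-/

open MeasureTheory
open scoped ENNReal

namespace ENNReal

lemma eq_zero_of_forall_le_of_tsum_ne_top {f : ℕ → ℝ≥0∞} {c : ℝ≥0∞} (hf : ∑' n, f n ≠ ∞)
    (hc : ∀ n, c ≤ f n) : c = 0 := by
  by_contra h
  exact hf (top_le_iff.1 <|
    (ENNReal.tsum_const_eq_top_of_ne_zero h).symm.le.trans (ENNReal.tsum_le_tsum hc))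

lemma exists_forall_le_two_mul_of_iSup_ne_top {ι : Type*} [Nonempty ι] {f : ι → ℝ≥0∞}
    (hf : ⨆ i, f i ≠ ∞) : ∃ i, ∀ j, f j ≤ 2 * f i := by
  by_cases h0 : ⨆ i, f i = 0
  · obtain ⟨i⟩ := ‹Nonempty ι›
    exact ⟨i, fun j => by simp [ENNReal.iSup_eq_zero.1 h0 j]⟩
  · obtain ⟨i, hi⟩ := lt_iSup_iff.1 (ENNReal.half_lt_self h0 hf)
    refine ⟨i, fun j => (le_iSup f j).trans ?_⟩
    calc ⨆ i, f i = 2 * ((⨆ i, f i) / 2) := (ENNReal.mul_div_cancel two_ne_zero ofNat_ne_top).symm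
      _ ≤ 2 * f i := by gcongr

lemma exists_inv_two_pow_lt_and_min_le {y : ℝ≥0∞} (hy : y ≠ 0) :
    ∃ n : ℕ, (2 ^ n : ℝ≥0∞)⁻¹ < y ∧ min 1 (y / 2) ≤ (2 ^ n)⁻¹ := by
  classical
  have hex : ∃ n : ℕ, (2 ^ n : ℝ≥0∞)⁻¹ < y := by
    simpa only [ENNReal.inv_pow] using ENNReal.exists_inv_two_pow_lt hy
  refine ⟨Nat.find hex, Nat.find_spec hex, ?_⟩
  rcases h : Nat.find hex with _ | m
  · simp
  · have hm : y ≤ (2 ^ m)⁻¹ := not_lt.1 (Nat.find_min hex (h ▸ Nat.lt_succ_self m))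
    refine min_le_of_right_le ((ENNReal.div_le_iff two_ne_zero ofNat_ne_top).2 ?_)
    rwa [pow_succ, ENNReal.mul_inv (by simp) (by simp), mul_assoc,
      ENNReal.inv_mul_cancel two_ne_zero ofNat_ne_top, mul_one]

theorem exists_tsum_inv_two_pow_eq {x : ℝ≥0∞} (hx0 : x ≠ 0) (hx : x ≠ ∞) :
    ∃ ℓ : ℕ → ℕ, ∑' k, (2 ^ ℓ k : ℝ≥0∞)⁻¹ = x := by
  choose! ℓ hlt hmin using fun y (hy : y ≠ 0) => exists_inv_two_pow_lt_and_min_le hy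
  set r : ℕ → ℝ≥0∞ := fun k => (fun y => y - (2 ^ ℓ y)⁻¹)^[k] x
  have hr_succ : ∀ k, r (k + 1) = r k - (2 ^ ℓ (r k))⁻¹ := fun k =>
    Function.iterate_succ_apply' _ _ _
  have hr0 : ∀ k, r k ≠ 0 := by
    intro k
    induction k with
    | zero => exact hx0
    | succ k ih => rw [hr_succ]; exact (tsub_pos_of_lt (hlt _ ih)).ne'
  refine ⟨fun k => ℓ (r k), ?_⟩
  have hsum : ∀ n, ∑ k ∈ Finset.range n, (2 ^ ℓ (r k) : ℝ≥0∞)⁻¹ + r n = x := by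
    intro n
    induction n with
    | zero => simp [r]
    | succ n ih =>
      rw [Finset.sum_range_succ, hr_succ, add_assoc, add_tsub_cancel_of_le (hlt _ (hr0 n)).le, ih]
  have hle : ∑' k, (2 ^ ℓ (r k) : ℝ≥0∞)⁻¹ ≤ x :=
    ENNReal.tsum_le_of_sum_range_le fun n => le_self_add.trans_eq (hsum n)
  have hinf : ⨅ k, r k = 0 := by
    have hc : min 1 ((⨅ k, r k) / 2) = 0 :=
      eq_zero_of_forall_le_of_tsum_ne_top (ne_top_of_le_ne_top hx hle) fun k =>
        (min_le_min_left _ (by gcongr; exact iInf_le r k)).trans (hmin _ (hr0 k))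
    simpa using hc
  refine le_antisymm hle ?_
  calc x ≤ ⨅ n, (∑' k, (2 ^ ℓ (r k) : ℝ≥0∞)⁻¹ + r n) := le_iInf fun n =>
        (hsum n).symm.le.trans (by gcongr; exact ENNReal.sum_le_tsum _)
    _ = ∑' k, (2 ^ ℓ (r k) : ℝ≥0∞)⁻¹ := by rw [← ENNReal.add_iInf, hinf, add_zero]

end ENNReal

lemma Set.pairwise_disjoint_of_subset_succ_sdiff {α : Type*} {G P : ℕ → Set α} (hG : Monotone G)
    (hP : ∀ n, P n ⊆ G (n + 1) \ G n) : Pairwise (Function.onFun Disjoint P) := by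
  refine (pairwise_disjoint_on P).2 fun m n hmn => ?_
  have hPm : P m ⊆ G n := (hP m).trans (Set.sdiff_subset.trans (hG hmn))
  exact (Set.subset_sdiff.1 (hP n)).2.symm.mono_left hPm

namespace MeasureTheory.Measure

variable {X : Type*} [MeasurableSpace X] {μ : Measure X} {A : Set X}

def IsNonAtomic (μ : Measure X) : Prop :=
  ∀ A : Set X, MeasurableSet A → 0 < μ A → ∃ B ⊆ A, MeasurableSet B ∧ 0 < μ B ∧ μ B < μ A

lemma exists_subset_measure_le_forall_le_two_mul {s : ℝ≥0∞} (hs : s ≠ ∞) :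
    ∃ D ⊆ A, MeasurableSet D ∧ μ D ≤ s ∧
      ∀ D' ⊆ A, MeasurableSet D' → μ D' ≤ s → μ D' ≤ 2 * μ D := by
  let ι := {D // D ⊆ A ∧ MeasurableSet D ∧ μ D ≤ s}
  have : Nonempty ι := ⟨⟨∅, Set.empty_subset _, .empty, by simp⟩⟩
  obtain ⟨⟨D, hDA, hD, hDs⟩, hmax⟩ :=
    ENNReal.exists_forall_le_two_mul_of_iSup_ne_top (f := fun D : ι => μ D.1)
      (ne_top_of_le_ne_top hs (iSup_le fun D => D.2.2.2))
  exact ⟨D, hDA, hD, hDs, fun D' hD'A hD' hD's => hmax ⟨D', hD'A, hD', hD's⟩⟩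

namespace IsNonAtomic

lemma exists_subset_pos_le_half (hμ : μ.IsNonAtomic) (hA : MeasurableSet A) (h0 : 0 < μ A)
    (hfin : μ A ≠ ∞) : ∃ B ⊆ A, MeasurableSet B ∧ 0 < μ B ∧ μ B ≤ μ A / 2 := by
  obtain ⟨B, hBA, hB, hB0, hBlt⟩ := hμ A hA h0
  by_cases h : μ B ≤ μ A / 2
  · exact ⟨B, hBA, hB, hB0, h⟩
  have hdiff : μ (A \ B) = μ A - μ B := measure_sdiff hBA hB.nullMeasurableSet hBlt.ne_top
  refine ⟨A \ B, Set.sdiff_subset, hA.diff hB, hdiff ▸ tsub_pos_of_lt hBlt, ?_⟩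
  calc μ (A \ B) = μ A - μ B := hdiff
    _ ≤ μ A - μ A / 2 := tsub_le_tsub_left (not_le.1 h).le _
    _ = μ A / 2 := ENNReal.sub_half hfin

lemma exists_subset_pos_le (hμ : μ.IsNonAtomic) (hA : MeasurableSet A) (h0 : 0 < μ A)
    (hfin : μ A ≠ ∞) {ε : ℝ≥0∞} (hε : ε ≠ 0) : ∃ B ⊆ A, MeasurableSet B ∧ 0 < μ B ∧ μ B ≤ ε := by
  have hpow : ∀ n : ℕ, ∃ B ⊆ A, MeasurableSet B ∧ 0 < μ B ∧ μ B ≤ μ A * 2⁻¹ ^ n := by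
    intro n
    induction n with
    | zero => exact ⟨A, subset_rfl, hA, h0, by simp⟩
    | succ n ih =>
      obtain ⟨B, hBA, hB, hB0, hBn⟩ := ih
      obtain ⟨C, hCB, hC, hC0, hCB'⟩ :=
        hμ.exists_subset_pos_le_half hB hB0 (ne_top_of_le_ne_top hfin (measure_mono hBA))
      refine ⟨C, hCB.trans hBA, hC, hC0, hCB'.trans ?_⟩
      rw [pow_succ, ← mul_assoc, div_eq_mul_inv]
      gcongr
  obtain ⟨n, hn⟩ := ENNReal.exists_inv_two_pow_lt (ENNReal.div_pos hε hfin).ne'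
  obtain ⟨B, hBA, hB, hB0, hBn⟩ := hpow n
  refine ⟨B, hBA, hB, hB0, hBn.trans ?_⟩
  calc μ A * 2⁻¹ ^ n ≤ μ A * (ε / μ A) := by gcongr
    _ = ε := ENNReal.mul_div_cancel h0.ne' hfin

theorem exists_subset_measure_eq (hμ : μ.IsNonAtomic) (hA : MeasurableSet A) (hfin : μ A ≠ ∞)
    {r : ℝ≥0∞} (hr : r ≤ μ A) : ∃ B ⊆ A, MeasurableSet B ∧ μ B = r := by
  have hr_fin : r ≠ ∞ := ne_top_of_le_ne_top hfin hr
  choose! D hDsub hDm hDle hDmax using fun C : Set X =>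
    exists_subset_measure_le_forall_le_two_mul (μ := μ) (A := A \ C) (s := r - μ C)
      (ne_top_of_le_ne_top hr_fin tsub_le_self)
  set C : ℕ → Set X := fun n => (fun C => C ∪ D C)^[n] ∅
  have hC_succ : ∀ n, C (n + 1) = C n ∪ D (C n) := fun n => Function.iterate_succ_apply' _ _ _
  have hC : ∀ n, C n ⊆ A ∧ MeasurableSet (C n) ∧ μ (C n) ≤ r := by
    intro n
    induction n with
    | zero => simp [C]
    | succ n ih =>
      obtain ⟨hCA, hCm, hCr⟩ := ih
      rw [hC_succ]
      refine ⟨Set.union_subset hCA ((hDsub _).trans Set.sdiff_subset), hCm.union (hDm _), ?_⟩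
      calc μ (C n ∪ D (C n)) ≤ μ (C n) + μ (D (C n)) := measure_union_le _ _
        _ ≤ μ (C n) + (r - μ (C n)) := by gcongr; exact hDle _
        _ = r := add_tsub_cancel_of_le hCr
  have hmono : Monotone C := monotone_nat_of_le_succ fun n => hC_succ n ▸ Set.subset_union_left
  have hpiece : ∀ n, D (C n) ⊆ C (n + 1) \ C n := fun n =>
    Set.subset_sdiff.2 ⟨hC_succ n ▸ Set.subset_union_right, (Set.subset_sdiff.1 (hDsub _)).2⟩
  have hpieces : ∑' n, μ (D (C n)) ≠ ∞ := by
    rw [← measure_iUnion (Set.pairwise_disjoint_of_subset_succ_sdiff hmono hpiece) fun n => hDm _]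
    exact ne_top_of_le_ne_top hfin
      (measure_mono (Set.iUnion_subset fun n => (hDsub _).trans Set.sdiff_subset))
  have hUA : ⋃ n, C n ⊆ A := Set.iUnion_subset fun n => (hC n).1
  have hU : MeasurableSet (⋃ n, C n) := .iUnion fun n => (hC n).2.1
  have hUr : μ (⋃ n, C n) ≤ r := by
    rw [hmono.measure_iUnion]
    exact iSup_le fun n => (hC n).2.2
  refine ⟨⋃ n, C n, hUA, hU, hUr.antisymm (not_lt.1 fun hlt => ?_)⟩
  have hrest : 0 < μ (A \ ⋃ n, C n) := by
    rw [measure_sdiff hUA hU.nullMeasurableSet (ne_top_of_le_ne_top hr_fin hUr)]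
    exact tsub_pos_of_lt (hlt.trans_le hr)
  obtain ⟨G, hGsub, hG, hG0, hGle⟩ := hμ.exists_subset_pos_le (hA.diff hU) hrest
    (ne_top_of_le_ne_top hfin (measure_mono Set.sdiff_subset)) (tsub_pos_of_lt hlt).ne'
  have hG_le : ∀ n, μ G / 2 ≤ μ (D (C n)) := fun n =>
    ENNReal.div_le_of_le_mul' <| hDmax _ G
      (hGsub.trans (Set.sdiff_subset_sdiff_right (Set.subset_iUnion C n))) hG
      (hGle.trans (tsub_le_tsub_left (measure_mono (Set.subset_iUnion C n)) _))
  exact (ENNReal.half_pos hG0.ne').ne' (ENNReal.eq_zero_of_forall_le_of_tsum_ne_top hpieces hG_le)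

theorem exists_pairwise_disjoint_subsets_measure_eq (hμ : μ.IsNonAtomic) (hA : MeasurableSet A)
    (hfin : μ A ≠ ∞) {a : ℕ → ℝ≥0∞} (ha : ∑' k, a k ≤ μ A) :
    ∃ F : ℕ → Set X, (∀ k, MeasurableSet (F k)) ∧ (∀ k, F k ⊆ A) ∧
      Pairwise (Function.onFun Disjoint F) ∧ ∀ k, μ (F k) = a k := by
  choose! S hS using fun (B : Set X) (r : ℝ≥0∞) (hB : MeasurableSet B) (hBfin : μ B ≠ ∞)
    (hr : r ≤ μ B) => hμ.exists_subset_measure_eq hB hBfin hr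
  let G : ℕ → Set X := fun n => Nat.rec ∅ (fun k G => G ∪ S (A \ G) (a k)) n
  have hG_succ : ∀ n, G (n + 1) = G n ∪ S (A \ G n) (a n) := fun n => rfl
  have hpiece : ∀ n, MeasurableSet (G n) → μ (G n) = ∑ k ∈ Finset.range n, a k →
      S (A \ G n) (a n) ⊆ A \ G n ∧ MeasurableSet (S (A \ G n) (a n)) ∧
        μ (S (A \ G n) (a n)) = a n := by
    intro n hGm hGμ
    refine hS _ _ (hA.diff hGm) (ne_top_of_le_ne_top hfin (measure_mono Set.sdiff_subset)) ?_
    refine le_trans ?_ le_measure_sdiff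
    rw [hGμ]
    refine ENNReal.le_sub_of_add_le_left (ENNReal.sum_ne_top.2 fun k _ => ?_) ?_
    · exact ne_top_of_le_ne_top hfin ((ENNReal.le_tsum k).trans ha)
    · rw [← Finset.sum_range_succ]
      exact (ENNReal.sum_le_tsum _).trans ha
  have hG : ∀ n, MeasurableSet (G n) ∧ μ (G n) = ∑ k ∈ Finset.range n, a k := by
    intro n
    induction n with
    | zero => simp [G]
    | succ n ih =>
      obtain ⟨hsub, hm, hμS⟩ := hpiece n ih.1 ih.2
      rw [hG_succ, measure_union (Set.subset_sdiff.1 hsub).2.symm hm, hμS, ih.2,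
        Finset.sum_range_succ]
      exact ⟨ih.1.union hm, rfl⟩
  have hF := fun n => hpiece n (hG n).1 (hG n).2
  have hmono : Monotone G := monotone_nat_of_le_succ fun n => Set.subset_union_left
  refine ⟨fun k => S (A \ G k) (a k), fun k => (hF k).2.1,
    fun k => (hF k).1.trans Set.sdiff_subset,
    Set.pairwise_disjoint_of_subset_succ_sdiff hmono fun n => ?_, fun k => (hF k).2.2⟩
  exact Set.subset_sdiff.2 ⟨Set.subset_union_right, (Set.subset_sdiff.1 (hF n).1).2⟩

end IsNonAtomic

end MeasureTheory.Measure

/-- For a non-atomic measure `μ` and a measurable set `E` with `0 < μ(E) < ∞`, there are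
naturals `ℓ_k` and pairwise disjoint measurable subsets `E_k ⊆ E` with `μ(E_k) = 2^{-ℓ_k}`
and `∑_k 2^{-ℓ_k} = μ(E)`. -/
theorem stmt15 {X : Type*} [MeasurableSpace X] (μ : Measure X)
    (hNA : ∀ A : Set X, MeasurableSet A → 0 < μ A →
      ∃ B ⊆ A, MeasurableSet B ∧ 0 < μ B ∧ μ B < μ A)
    (E : Set X) (hE : MeasurableSet E) (hpos : 0 < μ E) (hfin : μ E < ∞) :
    ∃ (ℓ : ℕ → ℕ) (F : ℕ → Set X),
      (∀ k, MeasurableSet (F k)) ∧ (∀ k, F k ⊆ E) ∧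
      Pairwise (Function.onFun Disjoint F) ∧
      (∀ k, μ (F k) = ((2 : ℝ≥0∞) ^ ℓ k)⁻¹) ∧
      (∑' k, ((2 : ℝ≥0∞) ^ ℓ k)⁻¹) = μ E := by
  obtain ⟨ℓ, hℓ⟩ := ENNReal.exists_tsum_inv_two_pow_eq hpos.ne' hfin.ne
  obtain ⟨F, hFm, hFE, hFdisj, hFμ⟩ :=
    Measure.IsNonAtomic.exists_pairwise_disjoint_subsets_measure_eq hNA hE hfin.ne hℓ.le
  exact ⟨ℓ, F, hFm, hFE, hFdisj, hFμ, hℓ⟩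
end

section
/- Let T and S be positive semi-definite bounded operators on a Hilbert space H, K a closed subspace with projections P = P_K and Q = P_{K⊥}, and suppose: (i) ‖T‖ ≤ 1 and ‖S‖ ≤ 2; (ii) tr(P S P) ≤ γ ≤ 1 and tr(P T P) ≤ γ; (iii) −ε Q ≤ Q(S − T)Q ≤ ε Q. Then −ε Q − 4√γ I ≤ S − T ≤ ε Q + 4√γ I. -/
/-!
Write `x = p + q` with `p = P x ∈ K` and `q = Q x ∈ Kᗮ`. For a positive operator `B`, the
Cauchy–Schwarz inequality for the form `⟪B ·, ·⟫` bounds the cross term `2 re ⟪B p, q⟫` by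
`√a √b ‖x‖²` as soon as `re ⟪B p, p⟫ ≤ a ‖p‖²` and `re ⟪B q, q⟫ ≤ b ‖q‖²`. On `K` the trace
hypotheses give `a = γ` for both `S` and `T`, since the quadratic form of a positive operator is
bounded by its trace; on `Kᗮ` the norm bounds give `b = 2` for `S` and `b = 1` for `T`. So the
quadratic form of `(S - T) - Q (S - T) Q` is bounded in absolute value by
`(√(2γ) + √γ + γ) ‖x‖² ≤ 4 √γ ‖x‖²`, and adding the hypotheses on `Q (S - T) Q` gives both
inequalities.
-/

open ContinuousLinearMap
open scoped ComplexInnerProductSpace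

namespace ContinuousLinearMap

variable {H : Type*} [NormedAddCommGroup H] [InnerProductSpace ℂ H]

lemma re_inner_apply_self_le (B : H →L[ℂ] H) (x : H) : (⟪B x, x⟫).re ≤ ‖B‖ * ‖x‖ ^ 2 :=
  calc (⟪B x, x⟫).re ≤ ‖B x‖ * ‖x‖ := (Complex.re_le_norm _).trans (norm_inner_le_norm _ _)
    _ ≤ ‖B‖ * ‖x‖ * ‖x‖ := by gcongr; exact B.le_opNorm x
    _ = ‖B‖ * ‖x‖ ^ 2 := by ring

lemma inner_starProjection_comp_starProjection_apply_self (B : H →L[ℂ] H) (K : Submodule ℂ H)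
    [K.HasOrthogonalProjection] (x : H) :
    ⟪(K.starProjection ∘L B ∘L K.starProjection) x, x⟫
      = ⟪B (K.starProjection x), K.starProjection x⟫ :=
  K.inner_starProjection_left_eq_right _ x

variable [CompleteSpace H] {B : H →L[ℂ] H}

lemma IsPositive.inner_eq_inner_sqrt (hB : B.IsPositive) (u v : H) :
    ⟪B u, v⟫ = ⟪CFC.sqrt B u, CFC.sqrt B v⟫ := by
  have hsqrt : IsSelfAdjoint (CFC.sqrt B) := .of_nonneg (CFC.sqrt_nonneg B)
  conv_lhs => rw [← CFC.sqrt_mul_sqrt_self B ((nonneg_iff_isPositive B).2 hB)]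
  exact hsqrt.isSymmetric _ v

lemma IsPositive.re_inner_self_eq_norm_sqrt_sq (hB : B.IsPositive) (u : H) :
    (⟪B u, u⟫).re = ‖CFC.sqrt B u‖ ^ 2 := by
  rw [hB.inner_eq_inner_sqrt, ← RCLike.re_to_complex, inner_self_eq_norm_sq]

lemma IsPositive.norm_inner_le_sqrt_mul_sqrt (hB : B.IsPositive) (u v : H) :
    ‖⟪B u, v⟫‖ ≤ √(⟪B u, u⟫).re * √(⟪B v, v⟫).re := by
  simp only [hB.re_inner_self_eq_norm_sqrt_sq, Real.sqrt_sq (norm_nonneg _),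
    hB.inner_eq_inner_sqrt u v]
  exact norm_inner_le_norm _ _

lemma IsPositive.re_inner_self_le_of_hasSum {ι : Type*} (hB : B.IsPositive)
    (e : HilbertBasis ι ℂ H) {s : ℝ} (hs : HasSum (fun i => (⟪B (e i), e i⟫).re) s) (x : H) :
    (⟪B x, x⟫).re ≤ s * ‖x‖ ^ 2 := by
  set C := CFC.sqrt B
  have hC : IsSelfAdjoint C := .of_nonneg (CFC.sqrt_nonneg B)
  have parseval : HasSum (fun i => ‖⟪e i, C x⟫‖ ^ 2) (‖C x‖ ^ 2) := by
    have h := (e.hasSum_inner_mul_inner (C x) (C x)).mapL Complex.reCLM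
    have hterm (i : ι) : ⟪C x, e i⟫ * ⟪e i, C x⟫ = ((‖⟪e i, C x⟫‖ ^ 2 : ℝ) : ℂ) := by
      rw [← inner_conj_symm (C x), Complex.conj_mul']; norm_cast
    simpa [hterm, ← Complex.ofReal_pow] using h
  have term_le (i : ι) : ‖⟪e i, C x⟫‖ ^ 2 ≤ (⟪B (e i), e i⟫).re * ‖x‖ ^ 2 := by
    have hsymm : ⟪e i, C x⟫ = ⟪C (e i), x⟫ := (hC.isSymmetric (e i) x).symm
    rw [hB.re_inner_self_eq_norm_sqrt_sq, hsymm, ← mul_pow]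
    exact pow_le_pow_left₀ (norm_nonneg _) (norm_inner_le_norm _ _) 2
  rw [hB.re_inner_self_eq_norm_sqrt_sq]
  exact hasSum_le term_le parseval (hs.mul_right _)

lemma IsPositive.abs_re_inner_add_sub_le (hB : B.IsPositive) {p q : H} (hpq : ⟪p, q⟫ = 0)
    {a b : ℝ} (hp : (⟪B p, p⟫).re ≤ a * ‖p‖ ^ 2) (hq : (⟪B q, q⟫).re ≤ b * ‖q‖ ^ 2) :
    |(⟪B (p + q), p + q⟫).re - (⟪B p, p⟫).re - (⟪B q, q⟫).re| ≤ √a * √b * ‖p + q‖ ^ 2 := by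
  have expand : (⟪B (p + q), p + q⟫).re - (⟪B p, p⟫).re - (⟪B q, q⟫).re = 2 * (⟪B p, q⟫).re := by
    rw [map_add, inner_add_left, inner_add_right, inner_add_right, hB.inner_left_eq_inner_right q p,
      ← inner_conj_symm (B p) q]
    simp only [Complex.add_re, Complex.conj_re]
    ring
  have sqrt_le {u : H} {c : ℝ} (hu : (⟪B u, u⟫).re ≤ c * ‖u‖ ^ 2) : √(⟪B u, u⟫).re ≤ √c * ‖u‖ := by
    rw [← Real.sqrt_sq (norm_nonneg u), ← Real.sqrt_mul' _ (sq_nonneg _)]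
    exact Real.sqrt_le_sqrt hu
  have cross : ‖⟪B p, q⟫‖ ≤ √a * ‖p‖ * (√b * ‖q‖) :=
    (hB.norm_inner_le_sqrt_mul_sqrt p q).trans
      (mul_le_mul (sqrt_le hp) (sqrt_le hq) (Real.sqrt_nonneg _) (by positivity))
  have pythagoras : ‖p + q‖ ^ 2 = ‖p‖ ^ 2 + ‖q‖ ^ 2 := by
    simpa only [sq] using norm_add_sq_eq_norm_sq_add_norm_sq_of_inner_eq_zero p q hpq
  rw [expand, pythagoras, abs_mul, abs_two]
  calc 2 * |(⟪B p, q⟫).re| ≤ 2 * (√a * ‖p‖ * (√b * ‖q‖)) := by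
        gcongr; exact (Complex.abs_re_le_norm _).trans cross
    _ ≤ √a * √b * (‖p‖ ^ 2 + ‖q‖ ^ 2) := by
        nlinarith [mul_nonneg (Real.sqrt_nonneg a) (Real.sqrt_nonneg b), sq_nonneg (‖p‖ - ‖q‖)]

lemma IsPositive.re_inner_le_of_hasSum_conj_starProjection {ι : Type*} (hB : B.IsPositive)
    (K : Submodule ℂ H) [K.HasOrthogonalProjection] (e : HilbertBasis ι ℂ H) {s : ℝ}
    (hs : HasSum (fun i => (⟪(K.starProjection ∘L B ∘L K.starProjection) (e i), e i⟫).re) s)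
    {p : H} (hp : p ∈ K) : (⟪B p, p⟫).re ≤ s * ‖p‖ ^ 2 := by
  have := (hB.conj_starProjection K).re_inner_self_le_of_hasSum e hs p
  rwa [inner_starProjection_comp_starProjection_apply_self, K.starProjection_eq_self_iff.2 hp]
    at this

lemma abs_re_inner_sub_conj_starProjection_orthogonal_le {S T : H →L[ℂ] H} (hS : S.IsPositive)
    (hT : T.IsPositive) (hSn : ‖S‖ ≤ 2) (hTn : ‖T‖ ≤ 1) (K : Submodule ℂ H)
    [K.HasOrthogonalProjection] {γ : ℝ} (hγ1 : γ ≤ 1)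
    (hSK : ∀ p ∈ K, (⟪S p, p⟫).re ≤ γ * ‖p‖ ^ 2) (hTK : ∀ p ∈ K, (⟪T p, p⟫).re ≤ γ * ‖p‖ ^ 2)
    (x : H) :
    |(⟪((S - T) - Kᗮ.starProjection ∘L (S - T) ∘L Kᗮ.starProjection) x, x⟫).re|
      ≤ 4 * √γ * ‖x‖ ^ 2 := by
  set p := K.starProjection x
  set q := Kᗮ.starProjection x
  have hx : p + q = x := K.starProjection_add_starProjection_orthogonal x
  have hpq : ⟪p, q⟫ = 0 :=
    K.inner_right_of_mem_orthogonal (K.starProjection_apply_mem x) (Kᗮ.starProjection_apply_mem x)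
  have hSp := hSK p (K.starProjection_apply_mem x)
  have hTp := hTK p (K.starProjection_apply_mem x)
  have splitS := hS.abs_re_inner_add_sub_le hpq hSp (re_inner_apply_self_le S q)
  have splitT := hT.abs_re_inner_add_sub_le hpq hTp (re_inner_apply_self_le T q)
  rw [hx] at splitS splitT
  have hSp0 : 0 ≤ (⟪S p, p⟫).re := hS.re_inner_nonneg_left p
  have hTp0 : 0 ≤ (⟪T p, p⟫).re := hT.re_inner_nonneg_left p
  have diag : γ * ‖p‖ ^ 2 ≤ √γ * ‖x‖ ^ 2 :=
    mul_le_mul (Real.le_sqrt_self_iff.2 hγ1) (by gcongr; exact K.norm_starProjection_apply_le x)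
      (sq_nonneg _) (Real.sqrt_nonneg _)
  have hγx : 0 ≤ √γ * ‖x‖ ^ 2 := by positivity
  have offdiagS : √γ * √‖S‖ * ‖x‖ ^ 2 ≤ 2 * (√γ * ‖x‖ ^ 2) := by
    have : √‖S‖ ≤ 2 := (Real.sqrt_le_left zero_le_two).2 (by linarith)
    nlinarith
  have offdiagT : √γ * √‖T‖ * ‖x‖ ^ 2 ≤ 1 * (√γ * ‖x‖ ^ 2) := by
    have : √‖T‖ ≤ 1 := Real.sqrt_le_one.2 hTn
    nlinarith
  simp only [sub_apply, inner_sub_left, inner_starProjection_comp_starProjection_apply_self,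
    Complex.sub_re]
  rw [abs_le] at splitS splitT ⊢
  constructor <;> linarith

lemma isPositive_smul_one_sub_and_add_smul_one_of_abs_re_inner_le_s18 {D : H →L[ℂ] H}
    (hD : IsSelfAdjoint D) {c : ℝ} (h : ∀ x, |(⟪D x, x⟫).re| ≤ c * ‖x‖ ^ 2) :
    (c • (1 : H →L[ℂ] H) - D).IsPositive ∧ (D + c • (1 : H →L[ℂ] H)).IsPositive := by
  have hc : IsSelfAdjoint (c • (1 : H →L[ℂ] H)) := .smul (.all c) (.one _)
  have re_inner_c (x : H) : (⟪(c • (1 : H →L[ℂ] H)) x, x⟫).re = c * ‖x‖ ^ 2 := by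
    simp [← Complex.ofReal_pow]
  refine ⟨isPositive_def'.2 ⟨hc.sub hD, fun x => ?_⟩, isPositive_def'.2 ⟨hD.add hc, fun x => ?_⟩⟩ <;>
  · have := abs_le.1 (h x)
    simp only [reApplyInnerSelf_apply, sub_apply, add_apply, inner_sub_left, inner_add_left,
      map_sub, map_add, RCLike.re_to_complex, re_inner_c]
    linarith

end ContinuousLinearMap

theorem stmt18_general {H : Type*} [NormedAddCommGroup H] [InnerProductSpace ℂ H] [CompleteSpace H]
    (T S : H →L[ℂ] H) (hT : T.IsPositive) (hS : S.IsPositive)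
    (hTn : ‖T‖ ≤ 1) (hSn : ‖S‖ ≤ 2)
    (K : Submodule ℂ H) [CompleteSpace K]
    (P Q : H →L[ℂ] H)
    (hP : P = K.subtypeL.comp (Submodule.orthogonalProjection K))
    (hQ : Q = Kᗮ.subtypeL.comp (Submodule.orthogonalProjection Kᗮ))
    (γ ε : ℝ) (hγ1 : γ ≤ 1)
    (e : HilbertBasis ℕ ℂ H)
    (htrS : ∃ s ≤ γ, HasSum (fun i => (⟪(P.comp (S.comp P)) (e i), e i⟫).re) s)
    (htrT : ∃ s ≤ γ, HasSum (fun i => (⟪(P.comp (T.comp P)) (e i), e i⟫).re) s)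
    (hQu : ((ε • Q) - Q.comp ((S - T).comp Q)).IsPositive)
    (hQl : (Q.comp ((S - T).comp Q) + ε • Q).IsPositive) :
    ((ε • Q + (4 * Real.sqrt γ) • (1 : H →L[ℂ] H)) - (S - T)).IsPositive ∧
    ((S - T) + (ε • Q + (4 * Real.sqrt γ) • (1 : H →L[ℂ] H))).IsPositive := by
  replace hP : P = K.starProjection := hP
  replace hQ : Q = Kᗮ.starProjection := hQ
  subst hP hQ
  obtain ⟨sS, hsS, htrS⟩ := htrS
  obtain ⟨sT, hsT, htrT⟩ := htrT
  have hSK (p : H) (hp : p ∈ K) : (⟪S p, p⟫).re ≤ γ * ‖p‖ ^ 2 :=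
    (hS.re_inner_le_of_hasSum_conj_starProjection K e htrS hp).trans (by gcongr)
  have hTK (p : H) (hp : p ∈ K) : (⟪T p, p⟫).re ≤ γ * ‖p‖ ^ 2 :=
    (hT.re_inner_le_of_hasSum_conj_starProjection K e htrT hp).trans (by gcongr)
  have hA : IsSelfAdjoint (S - T) := hS.isSelfAdjoint.sub hT.isSelfAdjoint
  obtain ⟨hD_le, hD_ge⟩ := isPositive_smul_one_sub_and_add_smul_one_of_abs_re_inner_le_s18
    (hA.sub (hA.conj_starProjection Kᗮ))
    (abs_re_inner_sub_conj_starProjection_orthogonal_le hS hT hSn hTn K hγ1 hSK hTK)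
  constructor
  · convert hQu.add hD_le using 1; abel
  · convert hQl.add hD_ge using 1; abel

/-- If `T, S ≥ 0`, `‖T‖ ≤ 1`, `‖S‖ ≤ 2`, the compressions to a closed subspace `K` have traces
`tr(PSP), tr(PTP) ≤ γ ≤ 1`, and `−εQ ≤ Q(S−T)Q ≤ εQ` on `K⊥`, then
`−εQ − 4√γ I ≤ S − T ≤ εQ + 4√γ I`. -/
theorem stmt18 {H : Type*} [NormedAddCommGroup H] [InnerProductSpace ℂ H] [CompleteSpace H]
    (T S : H →L[ℂ] H) (hT : T.IsPositive) (hS : S.IsPositive)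
    (hTn : ‖T‖ ≤ 1) (hSn : ‖S‖ ≤ 2)
    (K : Submodule ℂ H) [CompleteSpace K]
    (P Q : H →L[ℂ] H)
    (hP : P = K.subtypeL.comp (Submodule.orthogonalProjection K))
    (hQ : Q = Kᗮ.subtypeL.comp (Submodule.orthogonalProjection Kᗮ))
    (γ ε : ℝ) (hγ0 : 0 ≤ γ) (hγ1 : γ ≤ 1)
    (e : HilbertBasis ℕ ℂ H)
    (htrS : ∃ s ≤ γ, HasSum (fun i => (⟪(P.comp (S.comp P)) (e i), e i⟫).re) s)
    (htrT : ∃ s ≤ γ, HasSum (fun i => (⟪(P.comp (T.comp P)) (e i), e i⟫).re) s)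
    (hQu : ((ε • Q) - Q.comp ((S - T).comp Q)).IsPositive)
    (hQl : (Q.comp ((S - T).comp Q) + ε • Q).IsPositive) :
    ((ε • Q + (4 * Real.sqrt γ) • (1 : H →L[ℂ] H)) - (S - T)).IsPositive ∧
    ((S - T) + (ε • Q + (4 * Real.sqrt γ) • (1 : H →L[ℂ] H))).IsPositive :=
  stmt18_general T S hT hS hTn hSn K P Q hP hQ γ ε hγ1 e htrS htrT hQu hQl
end
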